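/- Every symmetric polynomial in K[x₁,…,x_d] lies in the K-subalgebra of K[x₁,…,x_d] generated by 𝔱₁, 𝔱₂, …, 𝔱_d; that is, the K-subalgebra generated by 𝔱₁,…,𝔱_d equals the subalgebra of all symmetric polynomials. -/

import Mathlib

open scoped BigOperators

noncomputable section

/-- The field `K = ℚ(s₁,s₂)`, the fraction field of `ℚ[s₁,s₂]`. -/
abbrev Kf : Type := FractionRing (MvPolynomial (Fin 2) ℚ)

def s₁ : Kf := algebraMap (MvPolynomial (Fin 2) ℚ) Kf (MvPolynomial.X 0)
def s₂ : Kf := algebraMap (MvPolynomial (Fin 2) ℚ) Kf (MvPolynomial.X 1)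

/-- The power sum `𝔭_n = x₁^n + ⋯ + x_d^n` in `K[x₁,…,x_d]`. -/
def powSum (d n : ℕ) : MvPolynomial (Fin d) Kf := ∑ i : Fin d, MvPolynomial.X i ^ n

/-- The formal exponential `exp (z s) = Σ_{n≥0} s^n z^n / n!` as a power series in `z`
with coefficients in `K[x₁,…,x_d]`. -/
def expS (d : ℕ) (s : Kf) : PowerSeries (MvPolynomial (Fin d) Kf) :=
  PowerSeries.mk fun n => MvPolynomial.C (s ^ n / (n.factorial : Kf))

/-- The power series `Σ_{n≥0} 𝔭_n z^n / n!`. -/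
def psumS (d : ℕ) : PowerSeries (MvPolynomial (Fin d) Kf) :=
  PowerSeries.mk fun n => MvPolynomial.C ((n.factorial : Kf)⁻¹) * powSum d n

/-- The defining identity of the family `𝔱`:
`Σ_{k≥0} 𝔱_k z^{k+2} = (1/(s₁s₂)) (1 − e^{z s₁})(1 − e^{z s₂}) Σ_{n≥0} 𝔭_n z^n/n!`. -/
def IsTFamily (d : ℕ) (t : ℕ → MvPolynomial (Fin d) Kf) : Prop :=
  (PowerSeries.mk fun m => if 2 ≤ m then t (m - 2) else 0) =
    PowerSeries.C (R := MvPolynomial (Fin d) Kf) (MvPolynomial.C (1 / (s₁ * s₂))) *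
      ((1 - expS d s₁) * (1 - expS d s₂) * psumS d)

open MvPolynomial Finset

def eC (s : Kf) (n : ℕ) : Kf := (if n = 0 then 1 else 0) - s ^ n / n.factorial

lemma eC_zero (s : Kf) : eC s 0 = 0 := by simp [eC]

lemma eC_one (s : Kf) : eC s 1 = -s := by simp [eC]

lemma coeff_one_sub_expS (d : ℕ) (s : Kf) (n : ℕ) :
    PowerSeries.coeff n (1 - expS d s) = MvPolynomial.C (eC s n) := by
  rw [map_sub, PowerSeries.coeff_one, expS, PowerSeries.coeff_mk, eC, map_sub]
  congr 1
  split <;> simp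

lemma tfam_formula {d : ℕ} {t : ℕ → MvPolynomial (Fin d) Kf} (ht : IsTFamily d t) (k : ℕ) :
    t k = ∑ a ∈ range (k+3), ∑ u ∈ range (k+2-a+1),
      C ((1/(s₁*s₂)) * eC s₁ a * eC s₂ u * (((k+2-a-u).factorial : Kf))⁻¹)
        * powSum d (k+2-a-u) := by
  have h := congrArg (PowerSeries.coeff (k+2)) ht
  rw [PowerSeries.coeff_mk, if_pos (by omega : 2 ≤ k+2), Nat.add_sub_cancel] at h
  rw [h, mul_assoc, PowerSeries.coeff_C_mul, PowerSeries.coeff_mul,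
    Finset.Nat.sum_antidiagonal_eq_sum_range_succ_mk, Finset.mul_sum]
  refine Finset.sum_congr rfl fun a ha => ?_
  rw [PowerSeries.coeff_mul, Finset.Nat.sum_antidiagonal_eq_sum_range_succ_mk,
    coeff_one_sub_expS]
  simp only [Finset.mul_sum]
  refine Finset.sum_congr rfl fun u hu => ?_
  rw [coeff_one_sub_expS, psumS, PowerSeries.coeff_mk, map_mul, map_mul, map_mul]
  ring

lemma s_ne_zero (j : Fin 2) : algebraMap (MvPolynomial (Fin 2) ℚ) Kf (MvPolynomial.X j) ≠ 0 := by
  rw [map_ne_zero_iff _ (IsFractionRing.injective (MvPolynomial (Fin 2) ℚ) Kf)]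
  exact MvPolynomial.X_ne_zero j

lemma s₁_ne : s₁ ≠ 0 := s_ne_zero 0
lemma s₂_ne : s₂ ≠ 0 := s_ne_zero 1

lemma powSum_eq_psum (d n : ℕ) : powSum d n = psum (Fin d) Kf n := rfl

/-- elementary symmetric polys lie in the adjoin of power sums -/
lemma esymm_mem_adjoin_psum (d : ℕ) :
    ∀ k, 1 ≤ k → k ≤ d →
      esymm (Fin d) Kf k ∈ Algebra.adjoin Kf (Set.range fun i : Fin d => powSum d (i.val + 1)) := by
  intro k
  induction k using Nat.strong_induction_on with
  | _ k IH =>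
  intro hk1 hkd
  set P := Algebra.adjoin Kf (Set.range fun i : Fin d => powSum d (i.val + 1)) with hP
  have hpsum_mem : ∀ v, 1 ≤ v → v ≤ d → psum (Fin d) Kf v ∈ P := by
    intro v hv1 hvd
    refine Algebra.subset_adjoin ⟨⟨v - 1, by omega⟩, ?_⟩
    show powSum d (v - 1 + 1) = _
    rw [show v - 1 + 1 = v by omega, powSum_eq_psum]
  have hN := psum_eq_mul_esymm_sub_sum (Fin d) Kf k (by omega)
  have hN2 : ((-1 : MvPolynomial (Fin d) Kf)) ^ (k+1) * k * esymm (Fin d) Kf k =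
      psum (Fin d) Kf k +
      ∑ a ∈ Finset.HasAntidiagonal.antidiagonal k with a.1 ∈ Set.Ioo 0 k,
        (-1) ^ a.1 * esymm (Fin d) Kf a.1 * psum (Fin d) Kf a.2 := by
    rw [hN]; ring
  have hkK : ((k : Kf)) ≠ 0 := Nat.cast_ne_zero.mpr (by omega)
  have hesymm : esymm (Fin d) Kf k =
      C ((-1 : Kf) ^ (k+1) * (k : Kf)⁻¹) *
        (psum (Fin d) Kf k +
          ∑ a ∈ Finset.HasAntidiagonal.antidiagonal k with a.1 ∈ Set.Ioo 0 k,
            (-1) ^ a.1 * esymm (Fin d) Kf a.1 * psum (Fin d) Kf a.2) := by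
    rw [← hN2]
    have : (C ((-1 : Kf) ^ (k+1) * (k : Kf)⁻¹) : MvPolynomial (Fin d) Kf) *
        ((-1) ^ (k+1) * k) = 1 := by
      rw [show ((-1 : MvPolynomial (Fin d) Kf)) ^ (k+1) * (k : MvPolynomial (Fin d) Kf)
          = C ((-1 : Kf) ^ (k+1) * (k : Kf)) by
        rw [map_mul, map_pow, map_neg, map_one, map_natCast],
        ← map_mul, ← map_one (C (σ := Fin d) (R := Kf))]
      congr 1
      have hsq : ((-1 : Kf) ^ (k+1)) * ((-1 : Kf) ^ (k+1)) = 1 := by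
        rw [← pow_add, show (k+1)+(k+1) = 2*(k+1) by ring, pow_mul, neg_one_sq, one_pow]
      rw [show (-1:Kf)^(k+1) * (k:Kf)⁻¹ * ((-1:Kf)^(k+1) * (k:Kf))
          = ((-1:Kf)^(k+1) * (-1:Kf)^(k+1)) * ((k:Kf)⁻¹ * (k:Kf)) by ring, hsq,
        inv_mul_cancel₀ hkK, one_mul]
    rw [← mul_assoc, this, one_mul]
  rw [hesymm]
  refine mul_mem (P.algebraMap_mem _) (add_mem (hpsum_mem k hk1 hkd) (sum_mem fun a ha => ?_))
  rw [Finset.mem_filter, Finset.HasAntidiagonal.mem_antidiagonal] at ha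
  obtain ⟨h1, h2⟩ := ha
  rw [Set.mem_Ioo] at h2
  obtain ⟨h21, h22⟩ := h2
  refine mul_mem (mul_mem (pow_mem (neg_mem P.one_mem) _) (IH a.1 h22 h21 (by omega)))
    (hpsum_mem a.2 (by omega) (by omega))

lemma adjoin_psum_eq (d : ℕ) (hd : 1 ≤ d) :
    Algebra.adjoin Kf (Set.range fun i : Fin d => powSum d (i.val + 1)) =
      symmetricSubalgebra (Fin d) Kf := by
  apply le_antisymm
  · refine Algebra.adjoin_le ?_
    rintro _ ⟨i, rfl⟩
    simp only [SetLike.mem_coe, mem_symmetricSubalgebra, powSum_eq_psum]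
    exact psum_isSymmetric _ _ _
  · intro p hp
    obtain ⟨q, hq⟩ := esymmAlgHom_surjective (σ := Fin d) (R := Kf) (n := d)
      (by simp) ⟨p, hp⟩
    have hp' : p = aeval (fun i : Fin d => esymm (Fin d) Kf (i.val + 1)) q := by
      rw [← esymmAlgHom_apply, hq]
    rw [hp']
    have hmem : aeval (fun i : Fin d => esymm (Fin d) Kf (i.val + 1)) q ∈
        Algebra.adjoin Kf (Set.range fun i : Fin d => esymm (Fin d) Kf (i.val + 1)) := by
      rw [Algebra.adjoin_range_eq_range_aeval]; exact ⟨q, rfl⟩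
    refine Algebra.adjoin_le ?_ hmem
    rintro _ ⟨i, rfl⟩
    exact esymm_mem_adjoin_psum d (i.val + 1) (by omega) (by omega)

lemma powSum_mem_adjoin_t (d : ℕ) (hd : 1 ≤ d) {t : ℕ → MvPolynomial (Fin d) Kf}
    (ht : IsTFamily d t) :
    ∀ k, k ≤ d →
      powSum d k ∈ Algebra.adjoin Kf (Set.range fun i : Fin d => t (i.val + 1)) := by
  intro k
  induction k using Nat.strong_induction_on with
  | _ k IH =>
  intro hkd
  set T := Algebra.adjoin Kf (Set.range fun i : Fin d => t (i.val + 1)) with hT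
  rcases Nat.eq_zero_or_pos k with rfl | hk
  · have h0 : powSum d 0 = (d : MvPolynomial (Fin d) Kf) := by
      simp [powSum]
    rw [h0]; exact T.natCast_mem d
  · have hf := tfam_formula ht k
    have h1 : (1:ℕ) ∈ Finset.range (k+3) := by simp
    rw [← Finset.add_sum_erase _ _ h1] at hf
    have h2 : (1:ℕ) ∈ Finset.range (k+2-1+1) := by simp
    rw [← Finset.add_sum_erase _ _ h2, add_assoc] at hf
    have hco : (1/(s₁*s₂)) * eC s₁ 1 * eC s₂ 1 * (((k+2-1-1).factorial : Kf))⁻¹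
        = ((k.factorial : Kf))⁻¹ := by
      rw [eC_one, eC_one, show k+2-1-1 = k from rfl]
      field_simp [s₁_ne, s₂_ne]
    rw [hco] at hf
    have hfac : ((k.factorial : Kf)) ≠ 0 := Nat.cast_ne_zero.mpr k.factorial_ne_zero
    obtain ⟨r, hr_mem, hr_eq⟩ : ∃ r ∈ T,
        t k = MvPolynomial.C ((k.factorial : Kf))⁻¹ * powSum d k + r := by
      refine ⟨_, ?_, hf⟩
      refine add_mem (sum_mem fun u hu => ?_) (sum_mem fun a ha => ?_)
      · rw [Finset.mem_erase, Finset.mem_range] at hu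
        rcases Nat.eq_zero_or_pos u with rfl | hu0
        · simp only [eC_zero, mul_zero, zero_mul, map_zero]; exact T.zero_mem
        · exact mul_mem (T.algebraMap_mem _) (IH (k+2-1-u) (by omega) (by omega))
      · rw [Finset.mem_erase, Finset.mem_range] at ha
        refine sum_mem fun u hu => ?_
        rw [Finset.mem_range] at hu
        rcases Nat.eq_zero_or_pos a with rfl | ha0
        · simp only [eC_zero, mul_zero, zero_mul, map_zero]; exact T.zero_mem
        rcases Nat.eq_zero_or_pos u with rfl | hu0
        · simp only [eC_zero, mul_zero, zero_mul, map_zero]; exact T.zero_mem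
        · exact mul_mem (T.algebraMap_mem _) (IH (k+2-a-u) (by omega) (by omega))
    have hps : powSum d k = MvPolynomial.C ((k.factorial : Kf)) * (t k - r) := by
      rw [hr_eq, add_sub_cancel_right, ← mul_assoc, ← map_mul,
        mul_inv_cancel₀ hfac, map_one, one_mul]
    rw [hps]
    refine mul_mem (T.algebraMap_mem _) (sub_mem ?_ hr_mem)
    refine Algebra.subset_adjoin ⟨⟨k-1, by omega⟩, ?_⟩
    show t (k-1+1) = t k
    congr 1
    omega

/-- The `K`-subalgebra of `K[x₁,…,x_d]` generated by `𝔱₁, …, 𝔱_d` is exactly the subalgebra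
of all symmetric polynomials. -/
theorem stmt2 (d : ℕ) (hd : 1 ≤ d) (t : ℕ → MvPolynomial (Fin d) Kf)
    (ht : IsTFamily d t) :
    Algebra.adjoin Kf (Set.range fun i : Fin d => t (i.val + 1)) =
      MvPolynomial.symmetricSubalgebra (Fin d) Kf := by
  apply le_antisymm
  · refine Algebra.adjoin_le ?_
    rintro _ ⟨i, rfl⟩
    show t (i.val + 1) ∈ symmetricSubalgebra (Fin d) Kf
    rw [tfam_formula ht]
    refine sum_mem fun a _ => sum_mem fun u _ => mul_mem ?_ ?_
    · exact (symmetricSubalgebra (Fin d) Kf).algebraMap_mem _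
    · rw [powSum_eq_psum]
      exact (mem_symmetricSubalgebra _).mpr (psum_isSymmetric _ _ _)
  · rw [← adjoin_psum_eq d hd]
    refine Algebra.adjoin_le ?_
    rintro _ ⟨i, rfl⟩
    exact powSum_mem_adjoin_t d hd ht (i.val + 1) (by omega)
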